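/- arXiv:1606.04771 — 2 statements merged into one kernel-verified Lean document; each statement's English description precedes it below -/
import Mathlib

section
/- Let p be a natural number, c > 0, q > 0, x0 ≥ 0. Let f : ℝ → ℝ be a measurable probability density supported on [x0, ∞) (f ≥ 0 and ∫_{x0}^∞ f = 1) such that f·ln f is integrable on [x0, ∞), ∫_{x0}^∞ f(x)·ln((p+1)^(-1/q) + (x-x0)/c) dx = (1/q)·(H_{p+1} - ln(p+1)), and ∫_{x0}^∞ f(x)·ln(1 - (1 + (p+1)^(1/q)·(x-x0)/c)^(-q)) dx = -1/(p+1), where H_{p+1} = Σ_{k=1}^{p+1} 1/k. Then -∫_{x0}^∞ f(x)·ln(f(x)) dx ≤ -ln(q/c) + ((q+1)/q)·(H_{p+1} - ln(p+1)) + p/(p+1), i.e. the IF3 distribution maximizes differential entropy under these constraints. -/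
open MeasureTheory Real Set Filter Topology

/-! With `A = (p+1)^(-1/q)`, `B = (p+1)^(1/q)` and `u = 1 + B (x - x0)/c`, the IF3 density `g` is
the derivative of `(1 - u^(-q))^(p+1)`, so it is a probability density on `(x0, ∞)`, and
`log g = log (q/c) - (q+1) log (A + (x - x0)/c) + p log (1 - u^(-q))` because `A + (x - x0)/c = A u`.
The two constraints therefore pin `∫ f log g` to minus the claimed bound, and Gibbs' inequality
`∫ f log g ≤ ∫ f log f` finishes the proof. -/

theorem mul_log_le_mul_log_add_sub {a b : ℝ} (ha : 0 ≤ a) (hb : 0 < b) :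
    a * log b ≤ a * log a + (b - a) := by
  rcases ha.eq_or_lt with rfl | ha
  · simpa using hb.le
  have := log_le_sub_one_of_pos (div_pos hb ha)
  rw [log_div hb.ne' ha.ne'] at this
  have key : a * (log b - log a) ≤ a * (b / a - 1) := mul_le_mul_of_nonneg_left this ha.le
  rw [mul_sub, mul_sub, mul_div_cancel₀ _ ha.ne', mul_one] at key
  linarith

theorem integral_mul_log_le_integral_mul_log {α : Type*} [MeasurableSpace α] {μ : Measure α}
    {f g : α → ℝ} (hf : 0 ≤ᵐ[μ] f) (hg : ∀ᵐ x ∂μ, 0 < g x) (hf_int : Integrable f μ)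
    (hg_int : Integrable g μ) (hfg : ∫ x, g x ∂μ ≤ ∫ x, f x ∂μ)
    (hflogg : Integrable (fun x => f x * log (g x)) μ)
    (hflogf : Integrable (fun x => f x * log (f x)) μ) :
    ∫ x, f x * log (g x) ∂μ ≤ ∫ x, f x * log (f x) ∂μ := by
  have hgf : Integrable (fun x => g x - f x) μ := hg_int.sub hf_int
  have hmono : ∫ x, f x * log (g x) ∂μ ≤ ∫ x, f x * log (f x) + (g x - f x) ∂μ :=
    integral_mono_ae hflogg (hflogf.add hgf) <| by
      filter_upwards [hf, hg] with x hfx hgx using mul_log_le_mul_log_add_sub hfx hgx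
  rw [integral_add hflogf hgf, integral_sub hg_int hf_int] at hmono
  linarith

theorem rpow_neg_one_div_mul_one_add {a : ℝ} (ha : 0 < a) (q t : ℝ) :
    a ^ (-1 / q) * (1 + a ^ (1 / q) * t) = a ^ (-1 / q) + t := by
  rw [mul_add, mul_one, ← mul_assoc, ← rpow_add ha, neg_div, neg_add_cancel, rpow_zero, one_mul]

theorem rpow_neg_one_div_rpow_neg_sub_one {a q : ℝ} (ha : 0 < a) (hq : q ≠ 0) :
    (a ^ (-1 / q)) ^ (-q - 1) = a * a ^ (1 / q) := by
  rw [← rpow_mul ha.le, show -1 / q * (-q - 1) = 1 + 1 / q by field_simp; ring,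
    rpow_add ha, rpow_one]

noncomputable def if3PDF (p : ℕ) (c q x0 x : ℝ) : ℝ :=
  q / c * (((p : ℝ) + 1) ^ (-1 / q) + (x - x0) / c) ^ (-q - 1) *
    (1 - (1 + ((p : ℝ) + 1) ^ (1 / q) * ((x - x0) / c)) ^ (-q)) ^ p

noncomputable def if3CDF (p : ℕ) (c q x0 x : ℝ) : ℝ :=
  (1 - (1 + ((p : ℝ) + 1) ^ (1 / q) * ((x - x0) / c)) ^ (-q)) ^ (p + 1)

section IF3

variable {p : ℕ} {c q x0 x : ℝ}

lemma one_le_one_add_rpow_mul (hc : 0 < c) (hx : x0 ≤ x) :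
    1 ≤ 1 + ((p : ℝ) + 1) ^ (1 / q) * ((x - x0) / c) := by
  have : 0 ≤ ((p : ℝ) + 1) ^ (1 / q) * ((x - x0) / c) := by
    have := sub_nonneg.2 hx
    positivity
  linarith

lemma hasDerivAt_if3CDF (hc : 0 < c) (hq : q ≠ 0) (hx : x0 ≤ x) :
    HasDerivAt (if3CDF p c q x0) (if3PDF p c q x0 x) x := by
  set A : ℝ := ((p : ℝ) + 1) ^ (-1 / q)
  set B : ℝ := ((p : ℝ) + 1) ^ (1 / q)
  set u : ℝ := 1 + B * ((x - x0) / c)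
  have hu : 0 < u := one_pos.trans_le (one_le_one_add_rpow_mul hc hx)
  have hlin : HasDerivAt (fun y => 1 + B * ((y - x0) / c)) (B / c) x := by
    simpa [div_eq_mul_inv] using
      ((((hasDerivAt_id x).sub_const x0).div_const c).const_mul B).const_add 1
  have hcdf := ((hlin.rpow_const (p := -q) (Or.inl hu.ne')).const_sub 1).pow (p + 1)
  refine hcdf.congr_deriv ?_
  have hP : (0 : ℝ) < p + 1 := by positivity
  have hAu : A + (x - x0) / c = A * u := (rpow_neg_one_div_mul_one_add hP q _).symm
  rw [if3PDF, hAu, mul_rpow (by positivity) hu.le, rpow_neg_one_div_rpow_neg_sub_one hP hq]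
  push_cast
  ring

lemma tendsto_if3CDF_atTop (hc : 0 < c) (hq : 0 < q) :
    Tendsto (if3CDF p c q x0) atTop (𝓝 1) := by
  have hB : 0 < ((p : ℝ) + 1) ^ (1 / q) := by positivity
  have hu : Tendsto (fun x => 1 + ((p : ℝ) + 1) ^ (1 / q) * ((x - x0) / c)) atTop atTop :=
    tendsto_atTop_add_const_left _ _ <| (tendsto_atTop_add_const_right _ _ tendsto_id
      |>.atTop_div_const hc).const_mul_atTop hB
  have h := ((tendsto_rpow_neg_atTop hq).comp hu |>.const_sub 1).pow (p + 1)
  rwa [sub_zero, one_pow] at h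

@[simp]
lemma if3CDF_self : if3CDF p c q x0 x0 = 0 := by
  simp [if3CDF]

lemma one_sub_rpow_neg_pos (hc : 0 < c) (hq : 0 < q) (hx : x0 < x) :
    0 < 1 - (1 + ((p : ℝ) + 1) ^ (1 / q) * ((x - x0) / c)) ^ (-q) := by
  have hu : 1 < 1 + ((p : ℝ) + 1) ^ (1 / q) * ((x - x0) / c) := by
    have := sub_pos.2 hx
    have : 0 < ((p : ℝ) + 1) ^ (1 / q) * ((x - x0) / c) := by positivity
    linarith
  linarith [rpow_lt_one_of_one_lt_of_neg hu (neg_neg_of_pos hq)]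

lemma if3PDF_pos (hc : 0 < c) (hq : 0 < q) (hx : x0 < x) : 0 < if3PDF p c q x0 x := by
  have := one_sub_rpow_neg_pos (p := p) hc hq hx
  have := sub_pos.2 hx
  unfold if3PDF
  positivity

lemma integrableOn_if3PDF (hc : 0 < c) (hq : 0 < q) :
    IntegrableOn (if3PDF p c q x0) (Ioi x0) :=
  integrableOn_Ioi_deriv_of_nonneg' (fun _ hx => hasDerivAt_if3CDF hc hq.ne' hx)
    (fun _ hx => (if3PDF_pos hc hq hx).le) (tendsto_if3CDF_atTop hc hq)

lemma integral_if3PDF (hc : 0 < c) (hq : 0 < q) :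
    ∫ x in Ioi x0, if3PDF p c q x0 x = 1 := by
  simpa using integral_Ioi_of_hasDerivAt_of_nonneg'
    (fun _ hx => hasDerivAt_if3CDF hc hq.ne' hx) (fun _ hx => (if3PDF_pos hc hq hx).le) (tendsto_if3CDF_atTop hc hq)

lemma log_if3PDF (hc : 0 < c) (hq : 0 < q) (hx : x0 < x) :
    log (if3PDF p c q x0 x) = log (q / c)
      - (q + 1) * log (((p : ℝ) + 1) ^ (-1 / q) + (x - x0) / c)
      + p * log (1 - (1 + ((p : ℝ) + 1) ^ (1 / q) * ((x - x0) / c)) ^ (-q)) := by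
  have h1 := one_sub_rpow_neg_pos (p := p) hc hq hx
  have h2 : 0 < ((p : ℝ) + 1) ^ (-1 / q) + (x - x0) / c := by
    have := sub_pos.2 hx
    positivity
  rw [if3PDF, log_mul (by positivity) (by positivity), log_mul (by positivity) (by positivity),
    log_rpow h2, log_pow]
  ring

end IF3

theorem if3_max_entropy_general (p : ℕ) (c q x0 : ℝ) (hc : 0 < c) (hq : 0 < q)
    (f : ℝ → ℝ)
    (hf_nonneg : ∀ x, 0 ≤ f x)
    (hf_prob : ∫ x in Set.Ioi x0, f x = 1)
    (hf_logint : IntegrableOn (fun x => f x * Real.log (f x)) (Set.Ioi x0))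
    (hc1_int : IntegrableOn
      (fun x => f x * Real.log (((p : ℝ) + 1) ^ (-1 / q) + (x - x0) / c)) (Set.Ioi x0))
    (hc1 : ∫ x in Set.Ioi x0,
        f x * Real.log (((p : ℝ) + 1) ^ (-1 / q) + (x - x0) / c) =
      1 / q * ((∑ k ∈ Finset.range (p + 1), (1 : ℝ) / (k + 1)) - Real.log ((p : ℝ) + 1)))
    (hc2_int : IntegrableOn
      (fun x => f x *
        Real.log (1 - (1 + ((p : ℝ) + 1) ^ (1 / q) * ((x - x0) / c)) ^ (-q)))
      (Set.Ioi x0))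
    (hc2 : ∫ x in Set.Ioi x0,
        f x * Real.log (1 - (1 + ((p : ℝ) + 1) ^ (1 / q) * ((x - x0) / c)) ^ (-q)) =
      -(1 / ((p : ℝ) + 1))) :
    -∫ x in Set.Ioi x0, f x * Real.log (f x) ≤
      -Real.log (q / c) +
        (q + 1) / q *
          ((∑ k ∈ Finset.range (p + 1), (1 : ℝ) / (k + 1)) - Real.log ((p : ℝ) + 1)) +
        (p : ℝ) / ((p : ℝ) + 1) := by
  have hf_int : IntegrableOn f (Ioi x0) :=
    Integrable.of_integral_ne_zero (by rw [hf_prob]; exact one_ne_zero)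
  have hlog_eq : EqOn (fun x => f x * log (if3PDF p c q x0 x))
      (fun x => log (q / c) * f x
        - (q + 1) * (f x * log (((p : ℝ) + 1) ^ (-1 / q) + (x - x0) / c))
        + p * (f x * log (1 - (1 + ((p : ℝ) + 1) ^ (1 / q) * ((x - x0) / c)) ^ (-q))))
      (Ioi x0) := fun x hx => by
    simp only [log_if3PDF hc hq hx]
    ring
  have h0 : IntegrableOn (fun x => log (q / c) * f x) (Ioi x0) := hf_int.const_mul _
  have h1 := hc1_int.const_mul (q + 1)
  have h2 := hc2_int.const_mul (p : ℝ)
  have h01 := Integrable.sub' h0 h1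
  have hlog_int : IntegrableOn (fun x => f x * log (if3PDF p c q x0 x)) (Ioi x0) :=
    IntegrableOn.congr_fun (Integrable.fun_add h01 h2) hlog_eq.symm measurableSet_Ioi
  have hcross : ∫ x in Ioi x0, f x * log (if3PDF p c q x0 x) =
      log (q / c) - (q + 1) / q *
          ((∑ k ∈ Finset.range (p + 1), (1 : ℝ) / (k + 1)) - log ((p : ℝ) + 1))
        - p / ((p : ℝ) + 1) := by
    rw [setIntegral_congr_fun measurableSet_Ioi hlog_eq, integral_add h01 h2, integral_sub h0 h1,
      integral_const_mul, integral_const_mul, integral_const_mul, hf_prob, hc1, hc2]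
    field_simp
    ring
  have hgibbs := integral_mul_log_le_integral_mul_log (ae_of_all _ hf_nonneg)
    ((ae_restrict_iff' measurableSet_Ioi).2 (ae_of_all _ fun _ hx => if3PDF_pos hc hq hx))
    hf_int (integrableOn_if3PDF hc hq) (by rw [integral_if3PDF hc hq, hf_prob]) hlog_int hf_logint
  linarith

/-- The IF3 distribution maximizes the differential entropy among continuous
distributions supported on `[x0, ∞)` satisfying the two moment constraints. -/
theorem if3_max_entropy (p : ℕ) (c q x0 : ℝ) (hc : 0 < c) (hq : 0 < q)
    (hx0 : 0 ≤ x0) (f : ℝ → ℝ)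
    (hf_meas : Measurable f)
    (hf_nonneg : ∀ x, 0 ≤ f x)
    (hf_supp : ∀ x, x < x0 → f x = 0)
    (hf_prob : ∫ x in Set.Ioi x0, f x = 1)
    (hf_logint : IntegrableOn (fun x => f x * Real.log (f x)) (Set.Ioi x0))
    (hc1_int : IntegrableOn
      (fun x => f x * Real.log (((p : ℝ) + 1) ^ (-1 / q) + (x - x0) / c)) (Set.Ioi x0))
    (hc1 : ∫ x in Set.Ioi x0,
        f x * Real.log (((p : ℝ) + 1) ^ (-1 / q) + (x - x0) / c) =
      1 / q * ((∑ k ∈ Finset.range (p + 1), (1 : ℝ) / (k + 1)) - Real.log ((p : ℝ) + 1)))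
    (hc2_int : IntegrableOn
      (fun x => f x *
        Real.log (1 - (1 + ((p : ℝ) + 1) ^ (1 / q) * ((x - x0) / c)) ^ (-q)))
      (Set.Ioi x0))
    (hc2 : ∫ x in Set.Ioi x0,
        f x * Real.log (1 - (1 + ((p : ℝ) + 1) ^ (1 / q) * ((x - x0) / c)) ^ (-q)) =
      -(1 / ((p : ℝ) + 1))) :
    -∫ x in Set.Ioi x0, f x * Real.log (f x) ≤
      -Real.log (q / c) +
        (q + 1) / q *
          ((∑ k ∈ Finset.range (p + 1), (1 : ℝ) / (k + 1)) - Real.log ((p : ℝ) + 1)) +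
        (p : ℝ) / ((p : ℝ) + 1) :=
  if3_max_entropy_general p c q x0 hc hq f hf_nonneg hf_prob hf_logint hc1_int hc1 hc2_int hc2
end

section
/- Let q > 0, let p ≥ 0 be a real number, and let n be a natural number with n < q. Then ∫_{(p+1)^(-1/q)}^∞ q·y^(-q-1)·(y - (p+1)^(-1/q))^n·(1 - y^(-q)/(p+1))^p dy = (p+1)^(1-n/q) · Σ_{k=0}^{n} binomial(n,k)·(-1)^k·B(1 - (n-k)/q, p+1), where B(a,b) = Γ(a)Γ(b)/Γ(a+b). -/
/-! The substitution `t = y ^ (-q) / (p + 1)` maps `(c, ∞)`, `c = (p + 1) ^ (-1 / q)`,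
onto `(0, 1)` and turns the integral into `(p + 1) c ^ n ∫₀¹ (t ^ (-1 / q) - 1) ^ n (1 - t) ^ p dt`.
Expanding the binomial gives a sum of Beta integrals `∫₀¹ t ^ (a - 1) (1 - t) ^ p dt` with
`a = 1 - (n - k) / q`, all convergent because `n < q`. -/

open MeasureTheory Real

noncomputable def betaFn (a b : ℝ) : ℝ := Real.Gamma a * Real.Gamma b / Real.Gamma (a + b)

open Set

section BetaIntegral

variable {a b : ℝ}

lemma ofReal_rpow_mul_one_sub_rpow {t : ℝ} (ht : t ∈ Ioo (0 : ℝ) 1) :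
    ((t ^ (a - 1) * (1 - t) ^ (b - 1) : ℝ) : ℂ) =
      (t : ℂ) ^ ((a : ℂ) - 1) * (1 - (t : ℂ)) ^ ((b : ℂ) - 1) := by
  rw [Complex.ofReal_mul, Complex.ofReal_cpow ht.1.le, Complex.ofReal_cpow (by linarith [ht.2])]
  push_cast
  rfl

lemma integrableOn_rpow_mul_one_sub_rpow (ha : 0 < a) (hb : 0 < b) :
    IntegrableOn (fun t : ℝ ↦ t ^ (a - 1) * (1 - t) ^ (b - 1)) (Ioo 0 1) := by
  have h := Complex.betaIntegral_convergent (u := a) (v := b) (by simpa) (by simpa)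
  rw [intervalIntegrable_iff_integrableOn_Ioo_of_le zero_le_one] at h
  simpa [IntegrableOn] using
    (h.congr_fun (fun t ht ↦ (ofReal_rpow_mul_one_sub_rpow ht).symm) measurableSet_Ioo).re

lemma integral_rpow_mul_one_sub_rpow (ha : 0 < a) (hb : 0 < b) :
    ∫ t in Ioo (0 : ℝ) 1, t ^ (a - 1) * (1 - t) ^ (b - 1) = betaFn a b := by
  rw [← Complex.ofReal_re (∫ t in Ioo (0 : ℝ) 1, _), ← integral_complex_ofReal,
    setIntegral_congr_fun measurableSet_Ioo fun t ht ↦ ofReal_rpow_mul_one_sub_rpow ht,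
    ← integral_Ioc_eq_integral_Ioo, ← intervalIntegral.integral_of_le zero_le_one]
  exact (ProbabilityTheory.beta_eq_betaIntegralReal a b ha hb).symm

end BetaIntegral

lemma integral_Ioi_rpow_neg_comp {q K : ℝ} (hq : 0 < q) (hK : 0 < K) (g : ℝ → ℝ) :
    ∫ y in Ioi (K ^ (-1 / q)), q * y ^ (-q - 1) * g (y ^ (-q) / K) =
      K * ∫ t in Ioo 0 1, g t := by
  have hpow : ∀ {x : ℝ}, 0 < x → (x ^ (-1 / q)) ^ (-q) = x := fun hx ↦ by
    rw [← rpow_mul hx.le, div_mul_eq_mul_div, neg_mul_neg, one_mul, div_self hq.ne', rpow_one]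
  have himage : (fun y ↦ y ^ (-q) / K) '' Ioi (K ^ (-1 / q)) = Ioo 0 1 := by
    ext t
    constructor
    · rintro ⟨y, hy, rfl⟩
      have hy0 : 0 < y := (rpow_pos_of_pos hK _).trans hy
      refine ⟨by positivity, (div_lt_one hK).mpr ?_⟩
      simpa [hpow hK] using rpow_lt_rpow_of_neg (rpow_pos_of_pos hK _) hy (neg_lt_zero.mpr hq)
    · rintro ⟨ht0, ht1⟩
      refine ⟨(K * t) ^ (-1 / q), ?_, ?_⟩
      · exact rpow_lt_rpow_of_neg (by positivity) (mul_lt_of_lt_one_right hK ht1)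
          (div_neg_of_neg_of_pos (by norm_num) hq)
      · simp only [hpow (mul_pos hK ht0)]
        field_simp
  have hderiv : ∀ y ∈ Ioi (K ^ (-1 / q)),
      HasDerivWithinAt (fun y ↦ y ^ (-q) / K) (-q * y ^ (-q - 1) / K) (Ioi (K ^ (-1 / q))) y :=
    fun y hy ↦ ((hasDerivAt_rpow_const (Or.inl ((rpow_pos_of_pos hK _).trans hy).ne')).div_const
      K).hasDerivWithinAt
  have hinj : InjOn (fun y ↦ y ^ (-q) / K) (Ioi (K ^ (-1 / q))) := fun x hx y hy hxy ↦
    rpow_left_injOn (neg_ne_zero.mpr hq.ne') ((rpow_pos_of_pos hK _).trans hx).le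
      ((rpow_pos_of_pos hK _).trans hy).le ((div_left_inj' hK.ne').mp hxy)
  rw [← himage, integral_image_eq_integral_abs_deriv_smul measurableSet_Ioi hderiv hinj,
    ← integral_const_mul]
  refine setIntegral_congr_fun measurableSet_Ioi fun y hy ↦ ?_
  have hy0 : 0 < y := (rpow_pos_of_pos hK _).trans hy
  rw [abs_div, abs_mul, abs_neg, abs_of_pos hq, abs_of_pos (rpow_pos_of_pos hy0 _),
    abs_of_pos hK, smul_eq_mul]
  field_simp

lemma rpow_neg_inv_sub_one_pow_eq_sum {t : ℝ} (ht : 0 < t) (q : ℝ) (n : ℕ) :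
    (t ^ (-1 / q) - 1) ^ n = ∑ k ∈ Finset.range (n + 1),
      (n.choose k : ℝ) * (-1) ^ k * t ^ ((1 - ((n : ℝ) - k) / q) - 1) := by
  rw [sub_eq_neg_add, add_pow]
  refine Finset.sum_congr rfl fun k hk ↦ ?_
  rw [← rpow_natCast (t ^ (-1 / q)), ← rpow_mul ht.le,
    Nat.cast_sub (Nat.lt_succ_iff.mp (Finset.mem_range.mp hk))]
  ring_nf

lemma integral_rpow_neg_inv_sub_one_pow_mul_one_sub_rpow {q b : ℝ} {n : ℕ} (hn : (n : ℝ) < q)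
    (hb : 0 < b) :
    ∫ t in Ioo (0 : ℝ) 1, (t ^ (-1 / q) - 1) ^ n * (1 - t) ^ (b - 1) =
      ∑ k ∈ Finset.range (n + 1),
        (n.choose k : ℝ) * (-1) ^ k * betaFn (1 - ((n : ℝ) - k) / q) b := by
  have hq : 0 < q := (Nat.cast_nonneg n).trans_lt hn
  have hexp : ∀ k ∈ Finset.range (n + 1), 0 < 1 - ((n : ℝ) - k) / q := fun k _ ↦ by
    rw [sub_pos, div_lt_one hq]
    linarith [(Nat.cast_nonneg k : (0 : ℝ) ≤ k)]
  calc _ = ∫ t in Ioo (0 : ℝ) 1, ∑ k ∈ Finset.range (n + 1), (n.choose k : ℝ) * (-1) ^ k *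
          (t ^ ((1 - ((n : ℝ) - k) / q) - 1) * (1 - t) ^ (b - 1)) := by
        refine setIntegral_congr_fun measurableSet_Ioo fun t ht ↦ ?_
        simp only [rpow_neg_inv_sub_one_pow_eq_sum ht.1, Finset.sum_mul, mul_assoc]
    _ = _ := by
      rw [integral_finsetSum _ fun k hk ↦
        (integrableOn_rpow_mul_one_sub_rpow (hexp k hk) hb).const_mul _]
      refine Finset.sum_congr rfl fun k hk ↦ ?_
      rw [integral_const_mul, integral_rpow_mul_one_sub_rpow (hexp k hk) hb]

theorem if3_moment_integral_general (q p : ℝ) (n : ℕ) (hp : 0 ≤ p)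
    (hn : (n : ℝ) < q) :
    ∫ y in Set.Ioi ((p + 1) ^ (-1 / q)),
        q * y ^ (-q - 1) * (y - (p + 1) ^ (-1 / q)) ^ n * (1 - y ^ (-q) / (p + 1)) ^ p =
      (p + 1) ^ (1 - (n : ℝ) / q) *
        ∑ k ∈ Finset.range (n + 1),
          (n.choose k : ℝ) * (-1) ^ k * betaFn (1 - ((n : ℝ) - k) / q) (p + 1) := by
  have hq : 0 < q := (Nat.cast_nonneg n).trans_lt hn
  have hp1 : 0 < p + 1 := by linarith
  set c := (p + 1) ^ (-1 / q)
  have hscale : (p + 1) * c ^ n = (p + 1) ^ (1 - (n : ℝ) / q) := by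
    rw [show 1 - (n : ℝ) / q = 1 + -1 / q * n by ring, rpow_add hp1, rpow_one, rpow_mul hp1.le,
      rpow_natCast]
  calc _ = ∫ y in Ioi c, q * y ^ (-q - 1) *
        ((c * (y ^ (-q) / (p + 1)) ^ (-1 / q) - c) ^ n * (1 - y ^ (-q) / (p + 1)) ^ p) := by
        refine setIntegral_congr_fun measurableSet_Ioi fun y hy ↦ ?_
        have hy0 : 0 < y := (rpow_pos_of_pos hp1 _).trans hy
        rw [div_rpow (rpow_nonneg hy0.le _) hp1.le, ← rpow_mul hy0.le,
          show -q * (-1 / q) = 1 by field_simp, rpow_one,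
          mul_div_cancel₀ _ (rpow_pos_of_pos hp1 _).ne']
        ring
    _ = (p + 1) * c ^ n *
          ∫ t in Ioo (0 : ℝ) 1, (t ^ (-1 / q) - 1) ^ n * (1 - t) ^ (p + 1 - 1) := by
        rw [integral_Ioi_rpow_neg_comp hq hp1 fun t ↦ (c * t ^ (-1 / q) - c) ^ n * (1 - t) ^ p,
          mul_assoc, ← integral_const_mul (c ^ n), add_sub_cancel_right]
        congr 1
        refine setIntegral_congr_fun measurableSet_Ioo fun t _ ↦ ?_
        rw [← mul_assoc, ← mul_pow, mul_sub, mul_one]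
    _ = _ := by rw [hscale, integral_rpow_neg_inv_sub_one_pow_mul_one_sub_rpow hn hp1]

/-- The integral `I(p,1,q)` arising in the moments of the IF3 distribution. -/
theorem if3_moment_integral (q p : ℝ) (n : ℕ) (hq : 0 < q) (hp : 0 ≤ p)
    (hn : (n : ℝ) < q) :
    ∫ y in Set.Ioi ((p + 1) ^ (-1 / q)),
        q * y ^ (-q - 1) * (y - (p + 1) ^ (-1 / q)) ^ n * (1 - y ^ (-q) / (p + 1)) ^ p =
      (p + 1) ^ (1 - (n : ℝ) / q) *
        ∑ k ∈ Finset.range (n + 1),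
          (n.choose k : ℝ) * (-1) ^ k * betaFn (1 - ((n : ℝ) - k) / q) (p + 1) :=
  if3_moment_integral_general q p n hp hn
end
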